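/- In CaTT, the coherence depth does not increase arbitrarily under substitution: cd(A[γ]) ≤ max(cd(A), cd(γ)), cd(t[γ]) ≤ max(cd(t), cd(γ)), and cd(δ∘γ) ≤ max(cd(δ), cd(γ)) for all types A, terms t and substitutions δ, γ. -/
import Mathlib


namespace CaTT

mutual
  /-- Terms of the theory `CaTT`: variables and the two coherence constructors
  `coh^op_{Γ,A}[γ]` and `coh_{Γ,A}[γ]`. -/
  inductive Tm : Type
    | var : ℕ → Tm
    | cohop : List (ℕ × Ty) → Ty → List (ℕ × Tm) → Tm
    | coh : List (ℕ × Ty) → Ty → List (ℕ × Tm) → Tm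
  /-- Types of the theory `CaTT`: `Obj` and `Hom A t u`. -/
  inductive Ty : Type
    | obj : Ty
    | hom : Ty → Tm → Tm → Ty
end

/-- Contexts (most recently declared variable first). -/
abbrev Ctx := List (ℕ × Ty)

/-- Substitutions (most recent assignment first). -/
abbrev Sub := List (ℕ × Tm)

/-- Action of a substitution on a variable. -/
def lookupSub (x : ℕ) : Sub → Tm
  | [] => .var x
  | (y, u) :: γ => if x = y then u else lookupSub x γ

mutual
  /-- Action of a substitution on a term. -/
  def Tm.sub : Tm → Sub → Tm
    | .var x, γ => lookupSub x γ
    | .cohop Γ A δ, γ => .cohop Γ A (Sub.comp δ γ)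
    | .coh Γ A δ, γ => .coh Γ A (Sub.comp δ γ)
  /-- Composition of substitutions. -/
  def Sub.comp : Sub → Sub → Sub
    | [], _ => []
    | (x, t) :: δ, γ => (x, Tm.sub t γ) :: Sub.comp δ γ
end

/-- Action of a substitution on a type. -/
def Ty.sub : Ty → Sub → Ty
  | .obj, _ => .obj
  | .hom A t u, γ => .hom (A.sub γ) (t.sub γ) (u.sub γ)

/-- The identity substitution of a context. -/
def idSub (Γ : Ctx) : Sub := Γ.map (fun p => (p.1, Tm.var p.1))

mutual
  /-- Free variables of a term. -/
  def Tm.vars : Tm → Set ℕ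
    | .var x => {x}
    | .cohop _ _ γ => Sub.vars γ
    | .coh _ _ γ => Sub.vars γ
  /-- Free variables of a substitution. -/
  def Sub.vars : Sub → Set ℕ
    | [] => ∅
    | (_, t) :: γ => Tm.vars t ∪ Sub.vars γ
end

/-- Free variables of a type. -/
def Ty.vars : Ty → Set ℕ
  | .obj => ∅
  | .hom A t u => A.vars ∪ t.vars ∪ u.vars

/-- The set of variables declared in a context. -/
def Ctx.domvars (Γ : Ctx) : Set ℕ := {x | ∃ A, (x, A) ∈ Γ}

/-- The dimension of a type, shifted so that `dimN Obj = 0`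
(the paper's dimension is `dimN - 1`). -/
def Ty.dimN : Ty → ℕ
  | .obj => 0
  | .hom A _ _ => A.dimN + 1

/-- The dimension of a context (the maximum of `dimN` of its types). -/
def ctxDim (Γ : Ctx) : ℕ := (Γ.map (fun p => p.2.dimN)).foldr max 0

/-- The `i`-source `∂⁻ᵢ` of a (ps-)context. -/
def bdm (i : ℕ) : Ctx → Ctx
  | f :: y :: Γ => if i ≤ y.2.dimN then bdm i Γ else f :: y :: bdm i Γ
  | Γ => Γ

/-- The `i`-target `∂⁺ᵢ` of a (ps-)context. -/
def bdp (i : ℕ) : Ctx → Ctx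
  | f :: y :: Γ =>
    if i + 1 ≤ y.2.dimN then bdp i Γ
    else if y.2.dimN = i then y :: (bdp i Γ).tail
    else f :: y :: bdp i Γ
  | Γ => Γ

/-- The source `∂⁻Γ` of a ps-context. -/
def srcCtx (Γ : Ctx) : Ctx := bdm (ctxDim Γ - 1) Γ

/-- The target `∂⁺Γ` of a ps-context. -/
def tgtCtx (Γ : Ctx) : Ctx := bdp (ctxDim Γ - 1) Γ

/-- The judgment `Γ ⊢ps x : A` recognizing ps-contexts, with dangling variable `x`. -/
inductive PsVar : Ctx → ℕ → Ty → Prop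
  | pss (x : ℕ) : PsVar [(x, .obj)] x .obj
  | pse {Γ : Ctx} {x : ℕ} {A : Ty} (y f : ℕ) :
      PsVar Γ x A → y ∉ Ctx.domvars Γ → f ∉ Ctx.domvars Γ → y ≠ f →
      PsVar ((f, .hom A (.var x) (.var y)) :: (y, A) :: Γ) f (.hom A (.var x) (.var y))
  | psd {Γ : Ctx} {f : ℕ} {A : Ty} {x y : ℕ} :
      PsVar Γ f (.hom A (.var x) (.var y)) → PsVar Γ y A

/-- The judgment `Γ ⊢ps`: `Γ` is a ps-context. -/
def PsDer (Γ : Ctx) : Prop := ∃ x, PsVar Γ x .obj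

mutual
  /-- Derivability of contexts in `CaTT`. -/
  inductive CtxDer : Ctx → Prop
    | nil : CtxDer []
    | ext {Γ : Ctx} {A : Ty} {x : ℕ} :
        CtxDer Γ → TyDer Γ A → x ∉ Ctx.domvars Γ → CtxDer ((x, A) :: Γ)
  /-- Derivability of types in `CaTT`. -/
  inductive TyDer : Ctx → Ty → Prop
    | obj {Γ : Ctx} : CtxDer Γ → TyDer Γ .obj
    | hom {Γ : Ctx} {A : Ty} {t u : Tm} :
        TyDer Γ A → TmDer Γ t A → TmDer Γ u A → TyDer Γ (.hom A t u)
  /-- Derivability of terms in `CaTT`, with the rules (var), (op) and (coh). -/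
  inductive TmDer : Ctx → Tm → Ty → Prop
    | var {Γ : Ctx} {x : ℕ} {A : Ty} : CtxDer Γ → (x, A) ∈ Γ → TmDer Γ (.var x) A
    | op {Γ : Ctx} {A : Ty} {t u : Tm} {Δ : Ctx} {γ : Sub} :
        PsDer Γ →
        TmDer (srcCtx Γ) t A → TmDer (tgtCtx Γ) u A →
        Tm.vars t ∪ Ty.vars A = Ctx.domvars (srcCtx Γ) →
        Tm.vars u ∪ Ty.vars A = Ctx.domvars (tgtCtx Γ) →
        SubDer Δ γ Γ →
        TmDer Δ (.cohop Γ (.hom A t u) γ) ((Ty.hom A t u).sub γ)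
    | coh {Γ : Ctx} {A : Ty} {t u : Tm} {Δ : Ctx} {γ : Sub} :
        PsDer Γ →
        TmDer Γ t A → TmDer Γ u A →
        Tm.vars t ∪ Ty.vars A = Ctx.domvars Γ →
        Tm.vars u ∪ Ty.vars A = Ctx.domvars Γ →
        SubDer Δ γ Γ →
        TmDer Δ (.coh Γ (.hom A t u) γ) ((Ty.hom A t u).sub γ)
  /-- Derivability of substitutions in `CaTT`. -/
  inductive SubDer : Ctx → Sub → Ctx → Prop
    | nil {Δ : Ctx} : CtxDer Δ → SubDer Δ [] []
    | cons {Δ : Ctx} {γ : Sub} {Γ : Ctx} {x : ℕ} {A : Ty} {t : Tm} :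
        SubDer Δ γ Γ → TyDer Γ A → x ∉ Ctx.domvars Γ → TmDer Δ t (A.sub γ) →
        SubDer Δ ((x, t) :: γ) ((x, A) :: Γ)
end

/-- The types `U_n` of the disk and sphere contexts. -/
def U : ℕ → Ty
  | 0 => .obj
  | n + 1 => .hom (U n) (.var (2 * n)) (.var (2 * n + 1))

/-- The sphere contexts; `SphC n` is the context `S^{n-1}` of the paper. -/
def SphC : ℕ → Ctx
  | 0 => []
  | n + 1 => (2 * n + 1, U n) :: (2 * n, U n) :: SphC n

/-- The disk contexts `D^n`. -/
def DiskC (n : ℕ) : Ctx := (2 * n, U n) :: SphC n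

/-- The characteristic substitution `χ_A : Γ → S^{dim A}` of a type. -/
def chiTy : Ty → Sub
  | .obj => []
  | .hom B t u => (2 * B.dimN + 1, u) :: (2 * B.dimN, t) :: chiTy B

/-- The characteristic substitution `χ_t : Γ → D^{dim A}` of a term `t` of type `A`. -/
def chiTm (t : Tm) (A : Ty) : Sub := (2 * A.dimN, t) :: chiTy A

end CaTT

namespace CaTT

mutual
  /-- Coherence depth of a term. -/
  def Tm.cd : Tm → ℕ
    | .var _ => 0
    | .cohop _ A γ => max (Ty.cd A + 1) (Sub.cd γ)
    | .coh _ A γ => max (Ty.cd A + 1) (Sub.cd γ)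
  /-- Coherence depth of a type. -/
  def Ty.cd : Ty → ℕ
    | .obj => 0
    | .hom A t u => max (Ty.cd A) (max (Tm.cd t) (Tm.cd u))
  /-- Coherence depth of a substitution. -/
  def Sub.cd : Sub → ℕ
    | [] => 0
    | (_, t) :: γ => max (Tm.cd t) (Sub.cd γ)
end

end CaTT

namespace CaTT

theorem lookup_cd_le (x : ℕ) (γ : Sub) : Tm.cd (lookupSub x γ) ≤ Sub.cd γ := by
  induction γ with
  | nil => simp [lookupSub, Tm.cd]
  | cons p γ ih =>
    obtain ⟨y, u⟩ := p
    simp only [lookupSub, Sub.cd]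
    split
    · exact le_max_left _ _
    · exact le_trans ih (le_max_right _ _)

mutual
  theorem tm_cd_sub (t : Tm) (γ : Sub) : Tm.cd (t.sub γ) ≤ max (Tm.cd t) (Sub.cd γ) := by
    cases t with
    | var x => exact le_trans (lookup_cd_le x γ) (le_max_right _ _)
    | cohop Γ A δ =>
      simp only [Tm.sub, Tm.cd]
      have := sub_cd_comp δ γ
      omega
    | coh Γ A δ =>
      simp only [Tm.sub, Tm.cd]
      have := sub_cd_comp δ γ
      omega
  theorem sub_cd_comp (δ γ : Sub) : Sub.cd (Sub.comp δ γ) ≤ max (Sub.cd δ) (Sub.cd γ) := by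
    cases δ with
    | nil => simp [Sub.comp, Sub.cd]
    | cons p δ' =>
      obtain ⟨x, t⟩ := p
      simp only [Sub.comp, Sub.cd]
      have h1 := tm_cd_sub t γ
      have h2 := sub_cd_comp δ' γ
      omega
end

theorem ty_cd_sub (A : Ty) (γ : Sub) : Ty.cd (A.sub γ) ≤ max (Ty.cd A) (Sub.cd γ) := by
  cases A with
  | obj => simp [Ty.sub, Ty.cd]
  | hom B t u =>
    simp only [Ty.sub, Ty.cd]
    have h0 := ty_cd_sub B γ
    have h1 := tm_cd_sub t γ
    have h2 := tm_cd_sub u γ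
    omega

end CaTT

open CaTT in
/-- In `CaTT`, coherence depth does not increase arbitrarily under substitution:
`cd(A[γ]) ≤ max (cd A) (cd γ)`, `cd(t[γ]) ≤ max (cd t) (cd γ)` and
`cd(δ ∘ γ) ≤ max (cd δ) (cd γ)`. -/
theorem catt_cd_sub_le :
    (∀ (A : Ty) (γ : Sub), Ty.cd (A.sub γ) ≤ max (Ty.cd A) (Sub.cd γ)) ∧
    (∀ (t : Tm) (γ : Sub), Tm.cd (t.sub γ) ≤ max (Tm.cd t) (Sub.cd γ)) ∧
    (∀ (δ γ : Sub), Sub.cd (Sub.comp δ γ) ≤ max (Sub.cd δ) (Sub.cd γ)) := by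
  exact ⟨CaTT.ty_cd_sub, CaTT.tm_cd_sub, CaTT.sub_cd_comp⟩
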